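/- Under the Hypothesis on the noise family g_{γ₁}, the reduced polynomial system F_k(γ₁, a₂, ã₃, ã₅, …, ã_N) = 0 (k = 2, 3, 5, …, N) obtained from the stationary Maxwellian Fourier system by writing a_p = a₁ã_p for odd p and eliminating even modes has, for γ₁ sufficiently near π/4, a unique differentiable solution branch through (π/4; 0, …, 0), and this branch satisfies a₂(γ₁) = (12/π)(γ₁ − π/4) + O((γ₁ − π/4)²), ã₃(γ₁) = (144 γ₃(π/4)/(4π γ₃(π/4) + 3π²))(γ₁ − π/4) + O((γ₁ − π/4)²), and ã_k(γ₁) = O((γ₁ − π/4)²) for odd k with 5 ≤ k ≤ N. -/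

import Mathlib

open Real

/-- Maxwellian kernel transform: `Γ(u) = sin(πu)/(πu)` for `u ≠ 0`, `Γ(0) = 1`. -/
noncomputable def Gam (u : ℝ) : ℝ :=
  if u = 0 then 1 else Real.sin (π * u) / (π * u)

/-- `m(q)`: the 2-adic valuation of `q`, so `q = ω(q)·2^{m(q)}` with `ω(q)` odd. -/
def mval (q : ℕ) : ℕ := padicValNat 2 q

/-- `ω(q)`: the odd part of `q`. -/
def om (q : ℕ) : ℕ := q / 2 ^ mval q

/-- `η(q) = 2^{m(q)-1}`, so that `q = 2ω(q)η(q)` for even `q`. -/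
def eta (q : ℕ) : ℕ := 2 ^ (mval q - 1)

/-- `γ̃_q = γ_q ∏_{j=1}^{m(q)-1} γ_{ω(q)2^{m(q)-j}}^{2^j}`, so that for even `q`
the even-mode relations give `a_q = γ̃_q a_{ω(q)}^{2η(q)}`. -/
noncomputable def tgam (γ : ℕ → ℝ → ℝ) (γ₁ : ℝ) (q : ℕ) : ℝ :=
  γ q γ₁ * ∏ j ∈ Finset.Ico 1 (mval q), (γ (om q * 2 ^ (mval q - j)) γ₁) ^ (2 ^ j)

/-- Extension of the reduced odd coordinates `ã` by the convention `ã₁ = 1`. -/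
def ext1 (ta : ℕ → ℝ) : ℕ → ℝ := fun p => if p = 1 then 1 else ta p

/-- The substituted product `a_q a_p / a₁ = γ̃_q (a₂/γ₂)^{η(q)} ã_{ω(q)}^{2η(q)} ã_p`
for `q` even and `p` odd. -/
noncomputable def Tsub (γ : ℕ → ℝ → ℝ) (γ₁ : ℝ) (a₂ : ℝ) (ta : ℕ → ℝ) (q p : ℕ) : ℝ :=
  tgam γ γ₁ q * (a₂ / γ 2 γ₁) ^ eta q * (ext1 ta (om q)) ^ (2 * eta q) * ext1 ta p

/-- For a pair `(n, m)` of indices of opposite parity, the substituted product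
`a_n a_m / a₁` written with the even index first. -/
noncomputable def PTsub (γ : ℕ → ℝ → ℝ) (γ₁ : ℝ) (a₂ : ℝ) (ta : ℕ → ℝ) (n m : ℕ) : ℝ :=
  if Even n then Tsub γ γ₁ a₂ ta n m else Tsub γ γ₁ a₂ ta m n

/-- The reduced polynomial system `F_k(γ₁, a₂, ã₃, ã₅, …, ã_N)`: `F₂` is the mode-1
stationary equation divided by `a₁`, and, for odd `k ≥ 3`, `F_k` is the mode-`k` stationary
equation divided by `a₁`, where `a_p = a₁ ã_p` for odd `p` and even modes are eliminated
through `a_q = γ̃_q a_{ω(q)}^{2η(q)}` and `a₁² = a₂/γ₂`. -/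
noncomputable def Fred (γ : ℕ → ℝ → ℝ) (N : ℕ) (γ₁ : ℝ) (a₂ : ℝ) (ta : ℕ → ℝ) (k : ℕ) : ℝ :=
  if k = 2 then
    (2 * γ 1 γ₁ * Gam (1 / 2) - 1)
      + 2 * γ 1 γ₁ * (∑ n ∈ Finset.Icc 2 N,
          Gam ((n : ℝ) - 1 / 2) * PTsub γ γ₁ a₂ ta n (n - 1))
  else
    (2 * γ k γ₁ * Gam ((k : ℝ) / 2) - 1) * ta k
      + γ k γ₁ * (∑ n ∈ Finset.Ico 1 k,
          Gam ((n : ℝ) - (k : ℝ) / 2) * PTsub γ γ₁ a₂ ta n (k - n))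
      + 2 * γ k γ₁ * (∑ n ∈ Finset.Icc (k + 1) N,
          Gam ((n : ℝ) - (k : ℝ) / 2) * PTsub γ γ₁ a₂ ta n (n - k))

/-!
The reduced system is the zero set of a `C²` map `G(γ₁, v)` on `ℝ × ℝ^{N+1}`, so the branch is
given by the implicit function theorem as soon as `∂G/∂v` is invertible at `(π/4, 0)`. Every
substituted product `a_q a_p / a₁` carries the factor `a₂ / γ₂` and, unless `(q, p) = (2, 1)`, a
second factor vanishing at the origin. Hence the linearisation is triangular: `F₂` gives
`(4/π) dγ₁ - (1/3) da₂`, `F₃` gives `(2γ₃Γ(3/2) - 1) dã₃ + (4/π) γ₃ da₂`, and `F_k` for `k ≥ 5`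
gives `(2γ_kΓ(k/2) - 1) dã_k`, whose diagonal entries are nonzero because
`|2γ_kΓ(k/2)| ≤ 4/(πk) < 1`. The slope `c` of the branch solves `G'(1, c) = 0`, which gives
`c₂ = 12/π`, `c₃ = 144γ₃/(4πγ₃ + 3π²)` and `c_k = 0` otherwise; the `O((γ₁ - π/4)²)` remainders are
Taylor's theorem for the `C²` branch.
-/

open Filter Topology Asymptotics

section Calculus

variable {F : Type*} [NormedAddCommGroup F] [NormedSpace ℝ F]

theorem ContDiffAt.isBigO_sub_sub_smul_deriv {f : ℝ → F} {a : ℝ} (hf : ContDiffAt ℝ 2 f a) :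
    (fun s => f s - f a - (s - a) • deriv f a) =O[𝓝 a] fun s => (s - a) ^ 2 := by
  obtain ⟨K, t, ht, hK⟩ := (hf.derivWithin (m := 1) (by norm_num)).exists_lipschitzOnWith
  have hdiff : ∀ᶠ s in 𝓝 a, DifferentiableAt ℝ f s :=
    (hf.eventually (by simp)).mono fun s hs => hs.differentiableAt (by norm_num)
  obtain ⟨r, hr, hball⟩ := Metric.mem_nhds_iff.mp (inter_mem ht hdiff)
  refine IsBigO.of_bound K (eventually_of_mem (Metric.ball_mem_nhds a hr) fun s hs => ?_)
  have hseg : ∀ x ∈ Set.uIcc a s, x ∈ t ∧ DifferentiableAt ℝ f x ∧ |x - a| ≤ |s - a| := by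
    intro x hx
    have hxa : |x - a| ≤ |s - a| := Set.abs_sub_left_of_mem_uIcc hx
    have hxb : x ∈ Metric.ball a r := by
      rw [Metric.mem_ball, Real.dist_eq] at hs ⊢; linarith
    exact ⟨(hball hxb).1, (hball hxb).2, hxa⟩
  -- mean value inequality for `x ↦ f x - x • f' a`, whose derivative is `O(|x - a|)` since `f'` is
  -- Lipschitz near `a`
  have hmvt := (convex_uIcc a s).norm_image_sub_le_of_norm_hasDerivWithin_le
    (f := fun x => f x - x • deriv f a) (f' := fun x => deriv f x - deriv f a)
    (C := K * |s - a|)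
    (fun x hx => ((hseg x hx).2.1.hasDerivAt.sub
      (by simpa using (hasDerivAt_id x).smul_const (deriv f a))).hasDerivWithinAt)
    (fun x hx => (hK.norm_sub_le (hseg x hx).1 (mem_of_mem_nhds ht)).trans
      (by rw [Real.norm_eq_abs]; exact mul_le_mul_of_nonneg_left (hseg x hx).2.2 K.2))
    Set.left_mem_uIcc Set.right_mem_uIcc
  calc ‖f s - f a - (s - a) • deriv f a‖
      = ‖(f s - s • deriv f a) - (f a - a • deriv f a)‖ := by rw [sub_smul]; congr 1; abel
    _ ≤ K * |s - a| * ‖s - a‖ := hmvt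
    _ = K * ‖(s - a) ^ 2‖ := by rw [norm_pow, Real.norm_eq_abs]; ring

theorem exists_unique_zero_branch [CompleteSpace F] {f : ℝ × F → F} {f' : ℝ × F →L[ℝ] F}
    {a : ℝ} {c : F} (hf : ContDiffAt ℝ 2 f (a, 0)) (hf' : HasFDerivAt f f' (a, 0))
    (hf0 : f (a, 0) = 0) (hinv : (f' ∘L .inr ℝ ℝ F).IsInvertible) (hc : f' (1, c) = 0) :
    ∃ φ : ℝ → F, φ a = 0 ∧ (∀ᶠ s in 𝓝 a, DifferentiableAt ℝ φ s ∧ f (s, φ s) = 0) ∧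
      (∀ ψ : ℝ → F, ContinuousAt ψ a → ψ a = 0 →
        ∀ᶠ s in 𝓝 a, f (s, ψ s) = 0 → ψ s = φ s) ∧
      (fun s => φ s - (s - a) • c) =O[𝓝 a] fun s => (s - a) ^ 2 := by
  rw [← hf'.fderiv] at hinv hc
  set φ := hf.implicitFunction two_ne_zero hinv
  have hφa : φ a = 0 := hf.implicitFunction_apply_self two_ne_zero hinv
  have hφ : ContDiffAt ℝ 2 φ a := hf.contDiffAt_implicitFunction two_ne_zero hinv
  have hderiv : deriv φ a = c := by
    have h := (hf.hasStrictFDerivAt_implicitFunction two_ne_zero hinv).hasFDerivAt.hasDerivAt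
    rw [h.deriv]
    simp only [neg_apply, ContinuousLinearMap.comp_apply,
      ContinuousLinearMap.inl_apply, neg_eq_iff_eq_neg]
    rw [hinv.inverse_apply_eq, ContinuousLinearMap.comp_apply, ContinuousLinearMap.inr_apply,
      ← sub_eq_zero, ← map_sub]
    simpa using hc
  refine ⟨φ, hφa, ?_, fun ψ hψ hψa => ?_, ?_⟩
  · filter_upwards [hφ.eventually (by simp), hf.eventually_apply_implicitFunction two_ne_zero hinv]
      with s hs hfs
    exact ⟨hs.differentiableAt (by norm_num), hfs.trans hf0⟩
  · have hlim : Tendsto (fun s => (s, ψ s)) (𝓝 a) (𝓝 (a, 0)) := by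
      simpa [hψa] using (continuousAt_id.prodMk hψ).tendsto
    filter_upwards [hlim.eventually (hf.eventually_apply_eq_iff_implicitFunction two_ne_zero hinv)]
      with s hs hfs
    exact (hs.mp (hfs.trans hf0.symm)).symm
  · simpa [hφa, hderiv] using hφ.isBigO_sub_sub_smul_deriv

theorem ContinuousLinearMap.isInvertible_of_injective [FiniteDimensional ℝ F] {f : F →L[ℝ] F}
    (hf : Function.Injective f) : f.IsInvertible :=
  ⟨(LinearEquiv.ofInjectiveEndo (f : F →ₗ[ℝ] F) hf).toContinuousLinearEquiv, rfl⟩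

end Calculus

noncomputable section

namespace MaxwellianFourier

variable {N : ℕ} {γ : ℕ → ℝ → ℝ}

lemma Gam_half : Gam (1 / 2) = 2 / π := by
  rw [Gam, if_neg (by norm_num), show π * (1 / 2) = π / 2 by ring, sin_pi_div_two]
  field_simp

lemma Gam_neg_half : Gam (-(1 / 2)) = 2 / π := by
  rw [Gam, if_neg (by norm_num), show π * -(1 / 2) = -(π / 2) by ring, sin_neg, sin_pi_div_two]
  field_simp

lemma Gam_three_half : Gam (3 / 2) = -(2 / (3 * π)) := by
  rw [Gam, if_neg (by norm_num), show π * (3 / 2) = π / 2 + π by ring, sin_add_pi,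
    sin_pi_div_two]
  field_simp
  norm_num

lemma abs_Gam_le {u : ℝ} (hu : 0 < u) : |Gam u| ≤ 1 / (π * u) := by
  rw [Gam, if_neg hu.ne', abs_div, abs_of_pos (by positivity : 0 < π * u)]
  gcongr
  exact abs_sin_le_one _

lemma two_mul_mul_Gam_lt_one {g u : ℝ} (hg : |g| ≤ 1) (hu : 3 / 2 ≤ u) : 2 * g * Gam u < 1 := by
  have hΓ := abs_Gam_le (by linarith : 0 < u)
  have hπu : 1 / (π * u) < 1 / 2 := by
    rw [div_lt_div_iff₀ (by nlinarith [pi_gt_three]) two_pos]; nlinarith [pi_gt_three]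
  calc 2 * g * Gam u ≤ 2 * (|g| * |Gam u|) := by
        rw [mul_assoc, ← abs_mul]; linarith [le_abs_self (g * Gam u)]
    _ ≤ 2 * (1 * (1 / (π * u))) := by gcongr
    _ < 1 := by linarith

def diagCoeff (γ : ℕ → ℝ → ℝ) (k : ℕ) : ℝ := 2 * γ k (π / 4) * Gam (k / 2) - 1

lemma diagCoeff_ne_zero {k : ℕ} (hγk : |γ k (π / 4)| ≤ 1) (hk : 3 ≤ k) :
    diagCoeff γ k ≠ 0 :=
  (sub_neg.mpr (two_mul_mul_Gam_lt_one hγk (by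
    rw [le_div_iff₀ two_pos]; norm_num; exact_mod_cast hk))).ne

lemma mval_eq_factorization (q : ℕ) : mval q = q.factorization 2 :=
  (Nat.factorization_def q Nat.prime_two).symm

lemma om_ne_one_of_eta_eq_one {q : ℕ} (hq : Even q) (hq2 : q ≠ 2) (hη : eta q = 1) :
    om q ≠ 1 := by
  intro hω
  have hq0 : q ≠ 0 := by rintro rfl; simp [om] at hω
  have hpos : 1 ≤ mval q := by
    rw [mval_eq_factorization]; exact Nat.prime_two.factorization_pos_of_dvd hq0 hq.two_dvd
  have hm : mval q = 1 := by
    by_contra h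
    have := Nat.pow_le_pow_right two_pos (show 1 ≤ mval q - 1 by omega)
    rw [eta] at hη; omega
  have := Nat.ordProj_mul_ordCompl_eq_self q 2
  rw [om, mval_eq_factorization] at hω
  rw [mval_eq_factorization] at hm
  rw [hm] at this hω
  omega

lemma one_le_eta (q : ℕ) : 1 ≤ eta q := Nat.one_le_two_pow

lemma om_odd {q : ℕ} (hq0 : q ≠ 0) : Odd (om q) := by
  rw [← Nat.not_even_iff_odd, even_iff_two_dvd, om, mval_eq_factorization]
  exact Nat.not_dvd_ordCompl Nat.prime_two hq0

lemma om_le (q : ℕ) : om q ≤ q := Nat.div_le_self _ _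

def coordOrZero (N i : ℕ) : (Fin (N + 1) → ℝ) →L[ℝ] ℝ :=
  if h : i < N + 1 then ContinuousLinearMap.proj (⟨i, h⟩ : Fin (N + 1)) else 0

lemma coordOrZero_apply (v : Fin (N + 1) → ℝ) (k : Fin (N + 1)) : coordOrZero N k v = v k := by
  simp [coordOrZero, k.2]

lemma coordOrZero_of_lt {i : ℕ} (hi : N < i) (v : Fin (N + 1) → ℝ) : coordOrZero N i v = 0 := by
  simp [coordOrZero, show ¬ i < N + 1 by omega]

lemma abs_coordOrZero_le (v : Fin (N + 1) → ℝ) (i : ℕ) : |coordOrZero N i v| ≤ ‖v‖ := by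
  unfold coordOrZero
  split_ifs
  · exact norm_le_pi_norm v _
  · simp

abbrev State (N : ℕ) := ℝ × (Fin (N + 1) → ℝ)

def coordSnd (N i : ℕ) : State N →L[ℝ] ℝ :=
  coordOrZero N i ∘L ContinuousLinearMap.snd ℝ ℝ _

def basePoint (N : ℕ) : State N := (π / 4, 0)

lemma contDiffAt_gamma (hγhigh : ∀ k, N < k → ∀ s, γ k s = 0)
    (hγC2 : ∀ k, k ≤ N → ContDiffOn ℝ 2 (γ k) (Set.Icc 0 1)) (j : ℕ) :
    ContDiffAt ℝ 2 (γ j) (π / 4) := by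
  rcases le_or_gt j N with hj | hj
  · exact (hγC2 j hj).contDiffAt (Icc_mem_nhds (by positivity) (by linarith [pi_lt_four]))
  · rw [funext (hγhigh j hj)]; exact contDiffAt_const

lemma contDiffAt_gamma_fst (hγ : ∀ j, ContDiffAt ℝ 2 (γ j) (π / 4)) (j : ℕ) :
    ContDiffAt ℝ 2 (fun x : State N => γ j x.1) (basePoint N) :=
  (hγ j).comp (f := Prod.fst) (basePoint N) contDiffAt_fst

lemma contDiffAt_ext1 (m : ℕ) (x : State N) :
    ContDiffAt ℝ 2 (fun x : State N => ext1 (coordOrZero N · x.2) m) x := by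
  unfold ext1
  split_ifs
  · exact contDiffAt_const
  · exact (coordSnd N m).contDiff.contDiffAt

lemma ext1_coordOrZero_zero {m : ℕ} (hm : m ≠ 1) :
    ext1 (coordOrZero N · (0 : Fin (N + 1) → ℝ)) m = 0 := by
  simp [ext1, hm]

def substTerm (γ : ℕ → ℝ → ℝ) (N q p : ℕ) (x : State N) : ℝ :=
  Tsub γ x.1 (coordOrZero N 2 x.2) (coordOrZero N · x.2) q p

lemma contDiffAt_substTerm (hγ : ∀ j, ContDiffAt ℝ 2 (γ j) (π / 4)) (h2 : γ 2 (π / 4) ≠ 0)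
    (q p : ℕ) : ContDiffAt ℝ 2 (substTerm γ N q p) (basePoint N) := by
  have hγx := contDiffAt_gamma_fst (N := N) hγ
  unfold substTerm Tsub tgam
  exact (((hγx q).mul (contDiffAt_prod fun j _ => (hγx _).pow _)).mul
    (((coordSnd N 2).contDiff.contDiffAt.div (hγx 2) h2).pow _) |>.mul
    ((contDiffAt_ext1 _ _).pow _)).mul (contDiffAt_ext1 _ _)

lemma substTerm_basePoint (q p : ℕ) : substTerm γ N q p (basePoint N) = 0 := by
  simp [substTerm, Tsub, basePoint, eta]

lemma hasFDerivAt_substTerm_two_one (hγ : ∀ j, ContDiffAt ℝ 2 (γ j) (π / 4))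
    (h2 : γ 2 (π / 4) ≠ 0) : HasFDerivAt (substTerm γ N 2 1) (coordSnd N 2) (basePoint N) := by
  refine (coordSnd N 2).hasFDerivAt.congr_of_eventuallyEq ?_
  filter_upwards [(contDiffAt_gamma_fst hγ 2).continuousAt.eventually_ne h2] with x hx
  have h2 : mval 2 = 1 := padicValNat.self one_lt_two
  simp [substTerm, Tsub, tgam, ext1, eta, om, h2, coordSnd, mul_div_cancel₀ _ hx]

lemma hasFDerivAt_substTerm_eq_zero (hγ : ∀ j, ContDiffAt ℝ 2 (γ j) (π / 4))
    (h2 : γ 2 (π / 4) ≠ 0) {q p : ℕ} (hq : Even q) (hqp : ¬(q = 2 ∧ p = 1)) :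
    HasFDerivAt (substTerm γ N q p) (0 : State N →L[ℝ] ℝ) (basePoint N) := by
  have hγx := contDiffAt_gamma_fst (N := N) hγ
  set a : State N → ℝ := fun x => coordOrZero N 2 x.2 / γ 2 x.1
  set rest : State N → ℝ := fun x =>
    tgam γ x.1 q * a x ^ (eta q - 1) * ext1 (coordOrZero N · x.2) (om q) ^ (2 * eta q) *
      ext1 (coordOrZero N · x.2) p
  have ha : ContDiffAt ℝ 2 a (basePoint N) :=
    (coordSnd N 2).contDiff.contDiffAt.div (hγx 2) h2
  have hrest : ContDiffAt ℝ 2 rest (basePoint N) := by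
    refine ((((hγx q).mul (contDiffAt_prod fun j _ => (hγx _).pow _)).mul (ha.pow _)).mul
      ((contDiffAt_ext1 _ _).pow _)).mul (contDiffAt_ext1 _ _)
  -- `Tsub` always contains the factor `a₂ / γ₂`; the remaining factor vanishes at the base point
  -- unless `(q, p) = (2, 1)`.
  have hsplit : substTerm γ N q p = fun x => a x * rest x := by
    funext x
    obtain ⟨e, he⟩ : ∃ e, eta q = e + 1 := ⟨eta q - 1, by have := one_le_eta q; omega⟩
    simp only [substTerm, Tsub, rest, a, he, Nat.add_sub_cancel, pow_succ]
    ring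
  have ha0 : a (basePoint N) = 0 := by simp [a, basePoint]
  have hrest0 : rest (basePoint N) = 0 := by
    simp only [rest, basePoint]
    by_cases hη : eta q = 1
    · by_cases hq2 : q = 2
      · rw [ext1_coordOrZero_zero (fun hp => hqp ⟨hq2, hp⟩), mul_zero]
      · rw [ext1_coordOrZero_zero (om_ne_one_of_eta_eq_one hq hq2 hη), hη, zero_pow two_ne_zero]
        ring
    · rw [show a (π / 4, 0) = 0 from ha0, zero_pow (by have := one_le_eta q; omega)]
      ring
  have h := (ha.differentiableAt two_ne_zero).hasFDerivAt.mul
    (hrest.differentiableAt two_ne_zero).hasFDerivAt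
  rw [ha0, hrest0, zero_smul, zero_smul, add_zero] at h
  rwa [hsplit]

def pairTerm (γ : ℕ → ℝ → ℝ) (N n m : ℕ) (x : State N) : ℝ :=
  PTsub γ x.1 (coordOrZero N 2 x.2) (coordOrZero N · x.2) n m

lemma pairTerm_eq (n m : ℕ) :
    pairTerm γ N n m = if Even n then substTerm γ N n m else substTerm γ N m n := by
  unfold pairTerm PTsub substTerm
  split_ifs <;> rfl

lemma pairTerm_basePoint (n m : ℕ) : pairTerm γ N n m (basePoint N) = 0 := by
  rw [pairTerm_eq]
  split_ifs <;> exact substTerm_basePoint _ _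

lemma contDiffAt_pairTerm (hγ : ∀ j, ContDiffAt ℝ 2 (γ j) (π / 4)) (h2 : γ 2 (π / 4) ≠ 0)
    (n m : ℕ) : ContDiffAt ℝ 2 (pairTerm γ N n m) (basePoint N) := by
  rw [pairTerm_eq]
  split_ifs <;> exact contDiffAt_substTerm hγ h2 _ _

lemma hasFDerivAt_pairTerm (hγ : ∀ j, ContDiffAt ℝ 2 (γ j) (π / 4)) (h2 : γ 2 (π / 4) ≠ 0)
    {n m : ℕ} (hnm : Odd (n + m)) :
    HasFDerivAt (pairTerm γ N n m)
      (if n = 2 ∧ m = 1 ∨ n = 1 ∧ m = 2 then coordSnd N 2 else 0) (basePoint N) := by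
  rw [pairTerm_eq]
  rcases Nat.even_or_odd n with hn | hn
  · rw [if_pos hn]
    split_ifs with h
    · obtain ⟨rfl, rfl⟩ : n = 2 ∧ m = 1 := h.resolve_right fun h' => by simp [h'.1] at hn
      exact hasFDerivAt_substTerm_two_one hγ h2
    · exact hasFDerivAt_substTerm_eq_zero hγ h2 hn fun h' => h (Or.inl h')
  · have hm : Even m := (Nat.odd_add.mp hnm).mp hn
    rw [if_neg (Nat.not_even_iff_odd.mpr hn)]
    split_ifs with h
    · obtain ⟨rfl, rfl⟩ : n = 1 ∧ m = 2 :=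
        h.resolve_left fun h' => Nat.not_odd_iff_even.mpr (h'.1 ▸ even_two) hn
      exact hasFDerivAt_substTerm_two_one hγ h2
    · exact hasFDerivAt_substTerm_eq_zero hγ h2 hm fun h' => h (Or.inr ⟨h'.2, h'.1⟩)

section Sums

variable {s : Finset ℕ} {c : ℕ → ℝ} {m : ℕ → ℕ}

lemma sum_pairTerm_basePoint : ∑ n ∈ s, c n * pairTerm γ N n (m n) (basePoint N) = 0 :=
  Finset.sum_eq_zero fun _ _ => by rw [pairTerm_basePoint, mul_zero]

lemma contDiffAt_sum_pairTerm (hγ : ∀ j, ContDiffAt ℝ 2 (γ j) (π / 4))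
    (h2 : γ 2 (π / 4) ≠ 0) :
    ContDiffAt ℝ 2 (fun x => ∑ n ∈ s, c n * pairTerm γ N n (m n) x) (basePoint N) :=
  ContDiffAt.sum fun _ _ => contDiffAt_const.mul (contDiffAt_pairTerm hγ h2 _ _)

lemma hasFDerivAt_sum_pairTerm (hγ : ∀ j, ContDiffAt ℝ 2 (γ j) (π / 4))
    (h2 : γ 2 (π / 4) ≠ 0) (hs : ∀ n ∈ s, Odd (n + m n)) :
    HasFDerivAt (fun x => ∑ n ∈ s, c n * pairTerm γ N n (m n) x)
      (∑ n ∈ s, c n • if n = 2 ∧ m n = 1 ∨ n = 1 ∧ m n = 2 then coordSnd N 2 else 0)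
      (basePoint N) :=
  HasFDerivAt.fun_sum fun n hn => (hasFDerivAt_pairTerm hγ h2 (hs n hn)).const_mul (c n)

end Sums

def residual (γ : ℕ → ℝ → ℝ) (N k : ℕ) (x : State N) : ℝ :=
  Fred γ N x.1 (coordOrZero N 2 x.2) (coordOrZero N · x.2) k

lemma residual_two_eq : residual γ N 2 = fun x =>
    (2 * γ 1 x.1 * Gam (1 / 2) - 1) +
      2 * γ 1 x.1 * ∑ n ∈ Finset.Icc 2 N, Gam (n - 1 / 2) * pairTerm γ N n (n - 1) x := by
  funext x; simp only [residual, Fred, pairTerm]; rfl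

lemma residual_eq_of_ne_two {k : ℕ} (hk : k ≠ 2) : residual γ N k = fun x =>
    (2 * γ k x.1 * Gam (k / 2) - 1) * coordOrZero N k x.2 +
      γ k x.1 * ∑ n ∈ Finset.Ico 1 k, Gam (n - k / 2) * pairTerm γ N n (k - n) x +
      2 * γ k x.1 * ∑ n ∈ Finset.Icc (k + 1) N, Gam (n - k / 2) * pairTerm γ N n (n - k) x := by
  funext x; simp only [residual, Fred, if_neg hk, pairTerm]

lemma residual_basePoint (hγ1 : ∀ s, γ 1 s = s) (k : ℕ) : residual γ N k (basePoint N) = 0 := by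
  by_cases hk : k = 2
  · simp only [hk, residual_two_eq, sum_pairTerm_basePoint]
    simp only [basePoint, hγ1, Gam_half]
    field_simp
    ring
  · simp only [residual_eq_of_ne_two hk, sum_pairTerm_basePoint]
    simp [basePoint]

lemma contDiffAt_residual (hγ : ∀ j, ContDiffAt ℝ 2 (γ j) (π / 4)) (h2 : γ 2 (π / 4) ≠ 0)
    (k : ℕ) : ContDiffAt ℝ 2 (residual γ N k) (basePoint N) := by
  have hγx := contDiffAt_gamma_fst (N := N) hγ
  by_cases hk : k = 2
  · rw [hk, residual_two_eq]
    exact (((contDiffAt_const.mul (hγx 1)).mul contDiffAt_const).sub contDiffAt_const).add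
      ((contDiffAt_const.mul (hγx 1)).mul (contDiffAt_sum_pairTerm hγ h2))
  · rw [residual_eq_of_ne_two hk]
    exact ((((contDiffAt_const.mul (hγx k)).mul contDiffAt_const).sub contDiffAt_const).mul
      (coordSnd N k).contDiff.contDiffAt |>.add
      ((hγx k).mul (contDiffAt_sum_pairTerm hγ h2))).add
      ((contDiffAt_const.mul (hγx k)).mul (contDiffAt_sum_pairTerm hγ h2))

lemma hasFDerivAt_residual_two (hγ1 : ∀ s, γ 1 s = s) (hγ : ∀ j, ContDiffAt ℝ 2 (γ j) (π / 4))
    (h2 : γ 2 (π / 4) ≠ 0) (hN : 2 ≤ N) :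
    HasFDerivAt (residual γ N 2)
      ((4 / π) • ContinuousLinearMap.fst ℝ ℝ _ - (1 / 3 : ℝ) • coordSnd N 2) (basePoint N) := by
  have hS := hasFDerivAt_sum_pairTerm (N := N) (s := Finset.Icc 2 N) (c := fun n => Gam (n - 1 / 2))
    (m := fun n => n - 1) hγ h2 fun n hn => by
      rw [Nat.odd_iff]; have := (Finset.mem_Icc.mp hn).1; omega
  rw [Finset.sum_eq_single_of_mem 2 (Finset.mem_Icc.mpr ⟨le_rfl, hN⟩) fun n hn hn2 => by
    rw [if_neg (by have := (Finset.mem_Icc.mp hn).1; omega), smul_zero]] at hS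
  have hfst : HasFDerivAt (fun x : State N => 2 * x.1) ((2 : ℝ) • ContinuousLinearMap.fst ℝ ℝ _)
      (basePoint N) := hasFDerivAt_fst.const_mul 2
  have h := ((hfst.mul_const (Gam (1 / 2))).sub_const 1).add (hfst.mul hS)
  rw [sum_pairTerm_basePoint] at h
  simp only [residual_two_eq, hγ1]
  refine h.congr_fderiv (ContinuousLinearMap.ext fun x => ?_)
  have h32 : ((2 : ℕ) : ℝ) - 1 / 2 = 3 / 2 := by norm_num
  simp only [h32, Gam_half, Gam_three_half]
  simp [basePoint, coordSnd]
  field_simp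
  ring

lemma sum_Ico_Gam_smul_ite {M : Type*} [AddCommGroup M] [Module ℝ M] (L : M) (k : ℕ) :
    (∑ n ∈ Finset.Ico 1 k,
        Gam (n - k / 2) • if n = 2 ∧ k - n = 1 ∨ n = 1 ∧ k - n = 2 then L else 0) =
      if k = 3 then (4 / π) • L else 0 := by
  split_ifs with h3
  · subst h3
    rw [show Finset.Ico 1 3 = {1, 2} from rfl, Finset.sum_pair (by norm_num)]
    norm_num [Gam_neg_half, Gam_half, ← add_smul]
    ring_nf
  · exact Finset.sum_eq_zero fun n hn => by
      rw [if_neg (by have := Finset.mem_Ico.mp hn; omega), smul_zero]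

lemma hasFDerivAt_residual_of_odd (hγ : ∀ j, ContDiffAt ℝ 2 (γ j) (π / 4))
    (h2 : γ 2 (π / 4) ≠ 0) {k : ℕ} (hk : Odd k) (hk3 : 3 ≤ k) :
    HasFDerivAt (residual γ N k)
      (diagCoeff γ k • coordSnd N k +
        if k = 3 then (4 / π * γ 3 (π / 4)) • coordSnd N 2 else 0) (basePoint N) := by
  have hko := Nat.odd_iff.mp hk
  have hγx := contDiffAt_gamma_fst (N := N) hγ
  have hlow := hasFDerivAt_sum_pairTerm (N := N) (s := Finset.Ico 1 k)
    (c := fun n => Gam (n - k / 2)) (m := fun n => k - n) hγ h2 fun n hn => by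
      rw [Nat.odd_iff]; have := Finset.mem_Ico.mp hn; omega
  have hhigh := hasFDerivAt_sum_pairTerm (N := N) (s := Finset.Icc (k + 1) N)
    (c := fun n => Gam (n - k / 2)) (m := fun n => n - k) hγ h2 fun n hn => by
      rw [Nat.odd_iff]; have := Finset.mem_Icc.mp hn; omega
  rw [Finset.sum_eq_zero fun n hn => by
    rw [if_neg (by have := Finset.mem_Icc.mp hn; omega), smul_zero]] at hhigh
  rw [sum_Ico_Gam_smul_ite] at hlow
  have hdiag := (((hγx k).differentiableAt two_ne_zero).hasFDerivAt.const_mul 2 |>.mul_const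
    (Gam (k / 2)) |>.sub_const 1).mul (coordSnd N k).hasFDerivAt
  have h := (hdiag.add (((hγx k).differentiableAt two_ne_zero).hasFDerivAt.mul hlow)).add
    ((((hγx k).differentiableAt two_ne_zero).hasFDerivAt.const_mul 2).mul hhigh)
  rw [residual_eq_of_ne_two (by omega)]
  refine h.congr_fderiv (ContinuousLinearMap.ext fun x => ?_)
  simp only [sum_pairTerm_basePoint]
  split_ifs with h3
  · subst h3; simp [diagCoeff, basePoint, coordSnd]; ring
  · simp [diagCoeff, basePoint, coordSnd]

def IsEquationIndex (k : ℕ) : Prop := k = 2 ∨ Odd k ∧ 3 ≤ k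

instance : DecidablePred IsEquationIndex :=
  fun k => inferInstanceAs (Decidable (k = 2 ∨ Odd k ∧ 3 ≤ k))

-- Indices that carry no equation (`0`, `1` and even `q ≥ 4`) are pinned to zero, so that the map
-- is square.
def reducedMap (γ : ℕ → ℝ → ℝ) (N : ℕ) (x : State N) : Fin (N + 1) → ℝ :=
  fun k => if IsEquationIndex k then residual γ N k x else x.2 k

def reducedDeriv (γ : ℕ → ℝ → ℝ) (N : ℕ) : State N →L[ℝ] (Fin (N + 1) → ℝ) :=
  ContinuousLinearMap.pi fun k =>
    if (k : ℕ) = 2 then (4 / π) • ContinuousLinearMap.fst ℝ ℝ _ - (1 / 3 : ℝ) • coordSnd N 2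
    else if IsEquationIndex k then
      diagCoeff γ k • coordSnd N k +
        if (k : ℕ) = 3 then (4 / π * γ 3 (π / 4)) • coordSnd N 2 else 0
    else coordSnd N k

lemma reducedDeriv_apply (x : State N) (k : Fin (N + 1)) :
    reducedDeriv γ N x k =
      if (k : ℕ) = 2 then 4 / π * x.1 - 1 / 3 * coordOrZero N 2 x.2
      else if IsEquationIndex k then
        diagCoeff γ k * x.2 k + if (k : ℕ) = 3 then 4 / π * γ 3 (π / 4) * coordOrZero N 2 x.2 else 0
      else x.2 k := by
  simp only [reducedDeriv, ContinuousLinearMap.pi_apply]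
  split_ifs <;> simp [coordSnd, coordOrZero_apply]

lemma reducedMap_basePoint (hγ1 : ∀ s, γ 1 s = s) : reducedMap γ N (basePoint N) = 0 := by
  funext k
  simp only [reducedMap, residual_basePoint hγ1]
  split_ifs <;> rfl

lemma contDiffAt_reducedMap (hγ : ∀ j, ContDiffAt ℝ 2 (γ j) (π / 4)) (h2 : γ 2 (π / 4) ≠ 0) :
    ContDiffAt ℝ 2 (reducedMap γ N) (basePoint N) :=
  contDiffAt_pi.mpr fun k => by
    unfold reducedMap
    split_ifs
    · exact contDiffAt_residual hγ h2 k
    · fun_prop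

lemma hasFDerivAt_reducedMap (hγ1 : ∀ s, γ 1 s = s) (hγ : ∀ j, ContDiffAt ℝ 2 (γ j) (π / 4))
    (h2 : γ 2 (π / 4) ≠ 0) (hN : 2 ≤ N) :
    HasFDerivAt (reducedMap γ N) (reducedDeriv γ N) (basePoint N) :=
  hasFDerivAt_pi.mpr fun k => by
    simp only [reducedMap]
    by_cases hk2 : (k : ℕ) = 2
    · simp only [hk2, if_true, show IsEquationIndex 2 from Or.inl rfl]
      exact hasFDerivAt_residual_two hγ1 hγ h2 hN
    rw [if_neg hk2]
    by_cases hk : IsEquationIndex k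
    · simp only [if_pos hk]
      exact hasFDerivAt_residual_of_odd hγ h2 (hk.resolve_left hk2).1 (hk.resolve_left hk2).2
    · simp only [if_neg hk]
      exact (coordSnd N k).hasFDerivAt.congr_of_eventuallyEq
        (Filter.Eventually.of_forall fun x => (coordOrZero_apply x.2 k).symm)

lemma coordOrZero_two_eq_zero_of_reducedDeriv {v : Fin (N + 1) → ℝ} (hN : 2 ≤ N)
    (hv : reducedDeriv γ N (0, v) = 0) : coordOrZero N 2 v = 0 := by
  have h := congrFun hv ⟨2, by omega⟩
  rw [reducedDeriv_apply, if_pos rfl] at h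
  simpa using h

lemma reducedDeriv_inr_injective (hN : 2 ≤ N)
    (hdiag : ∀ k, Odd k → 3 ≤ k → k ≤ N → diagCoeff γ k ≠ 0) :
    Function.Injective (reducedDeriv γ N ∘L ContinuousLinearMap.inr ℝ ℝ _) := by
  refine (injective_iff_map_eq_zero _).mpr fun v hv => funext fun k => ?_
  replace hv : reducedDeriv γ N (0, v) = 0 := hv
  have hv2 := coordOrZero_two_eq_zero_of_reducedDeriv hN hv
  have h := congrFun hv k
  simp only [reducedDeriv_apply, hv2, mul_zero, ite_self, add_zero, Pi.zero_apply] at h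
  by_cases hk2 : (k : ℕ) = 2
  · rw [← coordOrZero_apply v k, hk2, hv2]; rfl
  rw [if_neg hk2] at h
  split_ifs at h with hk
  · obtain ⟨hodd, hk3⟩ := hk.resolve_left hk2
    exact (mul_eq_zero.mp h).resolve_left (hdiag k hodd hk3 (by omega))
  · exact h

lemma four_pi_mul_add_three_pi_sq_ne_zero {g : ℝ} (hg : -1 ≤ g) : 4 * π * g + 3 * π ^ 2 ≠ 0 := by
  nlinarith [pi_gt_three]

def branchSlope (γ : ℕ → ℝ → ℝ) (k : ℕ) : ℝ :=
  if k = 2 then 12 / π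
  else if k = 3 then 144 * γ 3 (π / 4) / (4 * π * γ 3 (π / 4) + 3 * π ^ 2) else 0

lemma reducedDeriv_branchSlope (hN : 2 ≤ N) (h3 : 4 * π * γ 3 (π / 4) + 3 * π ^ 2 ≠ 0) :
    reducedDeriv γ N (1, fun k => branchSlope γ k) = 0 := by
  have hc2 : coordOrZero N 2 (fun k : Fin (N + 1) => branchSlope γ k) = 12 / π := by
    rw [show (2 : ℕ) = ((⟨2, by omega⟩ : Fin (N + 1)) : ℕ) from rfl, coordOrZero_apply]; rfl
  funext k
  rw [reducedDeriv_apply, hc2, Pi.zero_apply]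
  by_cases hk2 : (k : ℕ) = 2
  · rw [if_pos hk2]; field_simp; ring
  by_cases hk3 : (k : ℕ) = 3
  · simp only [hk3, branchSlope, diagCoeff, show IsEquationIndex 3 from Or.inr ⟨by decide, le_rfl⟩,
      if_true, if_neg (by decide : (3 : ℕ) ≠ 2)]
    rw [show ((3 : ℕ) : ℝ) / 2 = 3 / 2 by norm_num, Gam_three_half]
    generalize γ 3 (π / 4) = g at h3 ⊢
    have hg : g * 4 + π * 3 ≠ 0 := fun h => h3 (by linear_combination π * h)
    field_simp
    linear_combination (-144 * g) * mul_inv_cancel₀ hg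
  have hc : branchSlope γ k = 0 := by simp [branchSlope, hk2, hk3]
  split_ifs <;> simp [hc]

section Congr

variable {s a₂ : ℝ} {ta ta' : ℕ → ℝ}

lemma ext1_congr (h : ∀ p, Odd p → 3 ≤ p → p ≤ N → ta p = ta' p) {p : ℕ} (hp : Odd p)
    (hpN : p ≤ N) : ext1 ta p = ext1 ta' p := by
  unfold ext1
  split_ifs with h1
  · rfl
  · exact h p hp (by obtain ⟨j, rfl⟩ := hp; omega) hpN

lemma PTsub_congr (h : ∀ p, Odd p → 3 ≤ p → p ≤ N → ta p = ta' p) {n m : ℕ} (hn : 1 ≤ n)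
    (hm : 1 ≤ m) (hnN : n ≤ N) (hmN : m ≤ N) (hnm : Odd (n + m)) :
    PTsub γ s a₂ ta n m = PTsub γ s a₂ ta' n m := by
  have hT : ∀ q p, q ≠ 0 → q ≤ N → Odd p → p ≤ N → Tsub γ s a₂ ta q p = Tsub γ s a₂ ta' q p :=
    fun q p hq hqN hp hpN => by
      rw [Tsub, Tsub, ext1_congr h (om_odd hq) ((om_le q).trans hqN), ext1_congr h hp hpN]
  unfold PTsub
  split_ifs with he
  · exact hT n m (by omega) hnN ((Nat.odd_add'.mp hnm).mpr he) hmN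
  · exact hT m n (by omega) hmN (Nat.not_even_iff_odd.mp he) hnN

lemma sum_PTsub_congr (h : ∀ p, Odd p → 3 ≤ p → p ≤ N → ta p = ta' p) {S : Finset ℕ}
    {c : ℕ → ℝ} {m : ℕ → ℕ}
    (hS : ∀ n ∈ S, 1 ≤ n ∧ 1 ≤ m n ∧ n ≤ N ∧ m n ≤ N ∧ Odd (n + m n)) :
    ∑ n ∈ S, c n * PTsub γ s a₂ ta n (m n) = ∑ n ∈ S, c n * PTsub γ s a₂ ta' n (m n) :=
  Finset.sum_congr rfl fun n hn => by
    obtain ⟨h1, h2, h3, h4, h5⟩ := hS n hn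
    rw [PTsub_congr h h1 h2 h3 h4 h5]

lemma Fred_congr (h : ∀ p, Odd p → 3 ≤ p → p ≤ N → ta p = ta' p) {k : ℕ}
    (hk : IsEquationIndex k) (hkN : k ≤ N) : Fred γ N s a₂ ta k = Fred γ N s a₂ ta' k := by
  unfold Fred
  split_ifs with hk2
  · rw [sum_PTsub_congr h fun n hn => by
      have := Finset.mem_Icc.mp hn; exact ⟨by omega, by omega, this.2, by omega, by
        rw [Nat.odd_iff]; omega⟩]
  · obtain ⟨hodd, hk3⟩ := hk.resolve_left hk2
    have := Nat.odd_iff.mp hodd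
    rw [h k hodd hk3 hkN, sum_PTsub_congr h fun n hn => by
      have := Finset.mem_Ico.mp hn; exact ⟨by omega, by omega, by omega, by omega, by
        rw [Nat.odd_iff]; omega⟩, sum_PTsub_congr h fun n hn => by
      have := Finset.mem_Icc.mp hn; exact ⟨by omega, by omega, this.2, by omega, by
        rw [Nat.odd_iff]; omega⟩]

end Congr

def SolvesReduced (γ : ℕ → ℝ → ℝ) (N : ℕ) (s : ℝ) (ta : ℕ → ℝ) : Prop :=
  Fred γ N s (ta 2) ta 2 = 0 ∧ ∀ k, Odd k → 3 ≤ k → k ≤ N → Fred γ N s (ta 2) ta k = 0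

lemma solvesReduced_of_reducedMap_eq_zero {s : ℝ} {v : Fin (N + 1) → ℝ} (hN : 2 ≤ N)
    (hv : reducedMap γ N (s, v) = 0) : SolvesReduced γ N s (coordOrZero N · v) := by
  have h : ∀ k : Fin (N + 1), IsEquationIndex k → residual γ N k (s, v) = 0 := fun k hk => by
    simpa [reducedMap, hk] using congrFun hv k
  exact ⟨h ⟨2, by omega⟩ (Or.inl rfl), fun k hk hk3 hkN => h ⟨k, by omega⟩ (Or.inr ⟨hk, hk3⟩)⟩

def restrictToEquations (N : ℕ) (ta : ℕ → ℝ) : Fin (N + 1) → ℝ :=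
  fun k => if IsEquationIndex k then ta k else 0

lemma coordOrZero_restrictToEquations {ta : ℕ → ℝ} {k : ℕ} (hk : IsEquationIndex k)
    (hkN : k ≤ N) : coordOrZero N k (restrictToEquations N ta) = ta k := by
  rw [show k = ((⟨k, by omega⟩ : Fin (N + 1)) : ℕ) from rfl, coordOrZero_apply]
  exact if_pos hk

lemma reducedMap_restrictToEquations {s : ℝ} {ta : ℕ → ℝ} (hN : 2 ≤ N)
    (h : SolvesReduced γ N s ta) : reducedMap γ N (s, restrictToEquations N ta) = 0 := by
  funext k
  by_cases hk : IsEquationIndex k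
  · have hagree : ∀ p, Odd p → 3 ≤ p → p ≤ N →
        coordOrZero N p (restrictToEquations N ta) = ta p := fun p hp hp3 hpN =>
      coordOrZero_restrictToEquations (Or.inr ⟨hp, hp3⟩) hpN
    simp only [reducedMap, if_pos hk, residual, Pi.zero_apply]
    rw [Fred_congr hagree hk (by omega), coordOrZero_restrictToEquations (Or.inl rfl) hN]
    rcases hk with hk2 | ⟨hodd, hk3⟩
    · rw [hk2]; exact h.1
    · exact h.2 k hodd hk3 (by omega)
  · simp [reducedMap, restrictToEquations, hk]

lemma eventually_eq_of_solvesReduced {a : ℝ} {b : ℝ → Fin (N + 1) → ℝ} (hN : 2 ≤ N)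
    (hb : ∀ w : ℝ → Fin (N + 1) → ℝ, ContinuousAt w a → w a = 0 →
      ∀ᶠ s in 𝓝 a, reducedMap γ N (s, w s) = 0 → w s = b s)
    {ψ : ℝ → ℕ → ℝ} (hψc : ∀ k, ContinuousAt (fun s => ψ s k) a) (hψ0 : ∀ k, ψ a k = 0) :
    ∀ᶠ s in 𝓝 a, SolvesReduced γ N s (ψ s) →
      ψ s 2 = coordOrZero N 2 (b s) ∧
        ∀ k, Odd k → 3 ≤ k → k ≤ N → ψ s k = coordOrZero N k (b s) := by
  have hw : ContinuousAt (fun s => restrictToEquations N (ψ s)) a :=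
    continuousAt_pi.mpr fun k => by
      unfold restrictToEquations
      split_ifs
      · exact hψc k
      · exact continuousAt_const
  have hw0 : restrictToEquations N (ψ a) = 0 := funext fun k => by
    simp [restrictToEquations, hψ0]
  filter_upwards [hb _ hw hw0] with s hs hsol
  have hψb : ∀ k, IsEquationIndex k → k ≤ N → ψ s k = coordOrZero N k (b s) := fun k hk hkN => by
    rw [← hs (reducedMap_restrictToEquations hN hsol), coordOrZero_restrictToEquations hk hkN]
  exact ⟨hψb 2 (Or.inl rfl) hN, fun k hk hk3 hkN => hψb k (Or.inr ⟨hk, hk3⟩) hkN⟩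

lemma coordOrZero_branchSlope (hN : 2 ≤ N) (hγ3 : N < 3 → γ 3 (π / 4) = 0) (k : ℕ) :
    coordOrZero N k (fun i : Fin (N + 1) => branchSlope γ i) = branchSlope γ k := by
  rcases le_or_gt k N with hkN | hkN
  · exact coordOrZero_apply (N := N) _ ⟨k, by omega⟩
  · rw [coordOrZero_of_lt hkN]
    unfold branchSlope
    split_ifs with h2 h3
    · omega
    · simp [hγ3 (by omega)]
    · rfl

lemma abs_coordOrZero_sub_branchSlope_le (hN : 2 ≤ N) (hγ3 : N < 3 → γ 3 (π / 4) = 0)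
    {v : Fin (N + 1) → ℝ} {t C : ℝ}
    (hv : ‖v - t • fun i : Fin (N + 1) => branchSlope γ i‖ ≤ C * t ^ 2) :
    |coordOrZero N 2 v - 12 / π * t| ≤ C * t ^ 2 ∧
      |coordOrZero N 3 v - 144 * γ 3 (π / 4) / (4 * π * γ 3 (π / 4) + 3 * π ^ 2) * t| ≤
        C * t ^ 2 ∧
      ∀ k, Odd k → 5 ≤ k → k ≤ N → |coordOrZero N k v| ≤ C * t ^ 2 := by
  have h : ∀ k, |coordOrZero N k v - branchSlope γ k * t| ≤ C * t ^ 2 := fun k => by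
    rw [← coordOrZero_branchSlope hN hγ3 k, mul_comm, ← smul_eq_mul, ← map_smul, ← map_sub]
    exact (abs_coordOrZero_le _ _).trans hv
  refine ⟨by simpa [branchSlope] using h 2, by simpa [branchSlope] using h 3, fun k _ hk5 _ => ?_⟩
  have hk2 : k ≠ 2 := by omega
  have hk3 : k ≠ 3 := by omega
  simpa [branchSlope, hk2, hk3] using h k

end MaxwellianFourier

end

open MaxwellianFourier in
theorem stmt_15_general
    (N : ℕ) (hN : 2 ≤ N)
    (γ : ℕ → ℝ → ℝ)
    (hγ1 : ∀ s, γ 1 s = s)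
    (hγhigh : ∀ k, N < k → ∀ s, γ k s = 0)
    (hγC2 : ∀ k, k ≤ N → ContDiffOn ℝ 2 (γ k) (Set.Icc 0 1))
    (hγrange : ∀ k, 2 ≤ k → k ≤ N → ∀ s ∈ Set.Icc (0 : ℝ) 1, γ k s ∈ Set.Icc (-1 : ℝ) 1)
    (hγ2pos : ∀ s ∈ Set.Icc (0 : ℝ) 1, 0 < γ 2 s) :
    ∃ ε : ℝ, 0 < ε ∧ ∃ φ : ℝ → ℕ → ℝ,
      (∀ k, φ (π / 4) k = 0) ∧
      (∀ k, DifferentiableOn ℝ (fun s => φ s k) (Set.Ioo (π / 4 - ε) (π / 4 + ε))) ∧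
      (∀ γ₁ ∈ Set.Ioo (π / 4 - ε) (π / 4 + ε),
        Fred γ N γ₁ (φ γ₁ 2) (φ γ₁) 2 = 0 ∧
        ∀ k, Odd k → 3 ≤ k → k ≤ N → Fred γ N γ₁ (φ γ₁ 2) (φ γ₁) k = 0) ∧
      (∀ ψ : ℝ → ℕ → ℝ,
        (∀ k, ContinuousOn (fun s => ψ s k) (Set.Ioo (π / 4 - ε) (π / 4 + ε))) →
        (∀ k, ψ (π / 4) k = 0) →
        (∀ γ₁ ∈ Set.Ioo (π / 4 - ε) (π / 4 + ε),
          Fred γ N γ₁ (ψ γ₁ 2) (ψ γ₁) 2 = 0 ∧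
          ∀ k, Odd k → 3 ≤ k → k ≤ N → Fred γ N γ₁ (ψ γ₁ 2) (ψ γ₁) k = 0) →
        ∃ δ : ℝ, 0 < δ ∧ ∀ γ₁ ∈ Set.Ioo (π / 4 - δ) (π / 4 + δ),
          ψ γ₁ 2 = φ γ₁ 2 ∧ ∀ k, Odd k → 3 ≤ k → k ≤ N → ψ γ₁ k = φ γ₁ k) ∧
      (∃ C : ℝ, 0 < C ∧ ∀ γ₁ ∈ Set.Ioo (π / 4) (π / 4 + ε),
        |φ γ₁ 2 - (12 / π) * (γ₁ - π / 4)| ≤ C * (γ₁ - π / 4) ^ 2 ∧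
        |φ γ₁ 3 - (144 * γ 3 (π / 4) / (4 * π * γ 3 (π / 4) + 3 * π ^ 2)) * (γ₁ - π / 4)| ≤
          C * (γ₁ - π / 4) ^ 2 ∧
        ∀ k, Odd k → 5 ≤ k → k ≤ N → |φ γ₁ k| ≤ C * (γ₁ - π / 4) ^ 2) := by
  have hIcc : π / 4 ∈ Set.Icc (0 : ℝ) 1 := ⟨by positivity, by linarith [pi_lt_four]⟩
  have hγ := contDiffAt_gamma hγhigh hγC2
  have h2 : γ 2 (π / 4) ≠ 0 := (hγ2pos _ hIcc).ne'
  have hγ3 : N < 3 → γ 3 (π / 4) = 0 := fun h => hγhigh 3 h _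
  have hdiag : ∀ k, Odd k → 3 ≤ k → k ≤ N → diagCoeff γ k ≠ 0 := fun k _ hk3 hkN =>
    diagCoeff_ne_zero (abs_le.mpr (hγrange k (by omega) hkN _ hIcc)) hk3
  have hden : 4 * π * γ 3 (π / 4) + 3 * π ^ 2 ≠ 0 := four_pi_mul_add_three_pi_sq_ne_zero <|
    (le_or_gt 3 N).elim (fun h => (hγrange 3 (by norm_num) h _ hIcc).1)
      (fun h => by rw [hγ3 h]; norm_num)
  obtain ⟨b, hb0, hbsol, hbuniq, hbO⟩ := exists_unique_zero_branch (contDiffAt_reducedMap hγ h2)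
    (hasFDerivAt_reducedMap hγ1 hγ h2 hN) (reducedMap_basePoint hγ1)
    (ContinuousLinearMap.isInvertible_of_injective (reducedDeriv_inr_injective hN hdiag))
    (reducedDeriv_branchSlope hN hden)
  obtain ⟨C, hC, hCb⟩ := hbO.exists_pos
  obtain ⟨ε, hε, hball⟩ := Metric.eventually_nhds_iff_ball.mp <| hbsol.and <|
    hCb.bound.mono fun s hs => by rwa [norm_pow, Real.norm_eq_abs, sq_abs] at hs
  simp only [Real.ball_eq_Ioo] at hball
  refine ⟨ε, hε, fun s k => coordOrZero N k (b s), fun k => by simp [hb0],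
    fun k s hs =>
      ((coordOrZero N k).differentiableAt.comp s (hball s hs).1.1).differentiableWithinAt,
    fun s hs => solvesReduced_of_reducedMap_eq_zero hN (hball s hs).1.2,
    fun ψ hψc hψ0 hψ => ?_, C, hC, fun s hs => ?_⟩
  · have hnear : Set.Ioo (π / 4 - ε) (π / 4 + ε) ∈ 𝓝 (π / 4) :=
      Ioo_mem_nhds (by linarith) (by linarith)
    obtain ⟨δ, hδ, hδball⟩ := Metric.eventually_nhds_iff_ball.mp <|
      (eventually_eq_of_solvesReduced hN hbuniq (fun k => (hψc k).continuousAt hnear) hψ0).and hnear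
    simp only [Real.ball_eq_Ioo] at hδball
    exact ⟨δ, hδ, fun s hs => (hδball s hs).1 (hψ s (hδball s hs).2)⟩
  · exact abs_coordOrZero_sub_branchSlope_le hN hγ3 (hball s ⟨by linarith [hs.1], hs.2⟩).2

/-- Under the Hypothesis, the reduced polynomial system
`F_k(γ₁, a₂, ã₃, ã₅, …, ã_N) = 0` (`k = 2, 3, 5, …, N`) has, near `γ₁ = π/4`, a unique
differentiable solution branch through `(π/4; 0, …, 0)`, and this branch satisfies
`a₂(γ₁) = (12/π)(γ₁ - π/4) + O((γ₁-π/4)²)`,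
`ã₃(γ₁) = (144γ₃(π/4)/(4πγ₃(π/4)+3π²))(γ₁ - π/4) + O((γ₁-π/4)²)`, and
`ã_k(γ₁) = O((γ₁-π/4)²)` for odd `5 ≤ k ≤ N`. -/
theorem stmt_15
    (N : ℕ) (hN : 2 ≤ N)
    (γ : ℕ → ℝ → ℝ)
    (hγ0 : ∀ s, γ 0 s = 1)
    (hγ1 : ∀ s, γ 1 s = s)
    (hγhigh : ∀ k, N < k → ∀ s, γ k s = 0)
    (hγC2 : ∀ k, k ≤ N → ContDiffOn ℝ 2 (γ k) (Set.Icc 0 1))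
    (hγrange : ∀ k, 2 ≤ k → k ≤ N → ∀ s ∈ Set.Icc (0 : ℝ) 1, γ k s ∈ Set.Icc (-1 : ℝ) 1)
    (hγ2pos : ∀ s ∈ Set.Icc (0 : ℝ) 1, 0 < γ 2 s) :
    ∃ ε : ℝ, 0 < ε ∧ ∃ φ : ℝ → ℕ → ℝ,
      (∀ k, φ (π / 4) k = 0) ∧
      (∀ k, DifferentiableOn ℝ (fun s => φ s k) (Set.Ioo (π / 4 - ε) (π / 4 + ε))) ∧
      (∀ γ₁ ∈ Set.Ioo (π / 4 - ε) (π / 4 + ε),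
        Fred γ N γ₁ (φ γ₁ 2) (φ γ₁) 2 = 0 ∧
        ∀ k, Odd k → 3 ≤ k → k ≤ N → Fred γ N γ₁ (φ γ₁ 2) (φ γ₁) k = 0) ∧
      (∀ ψ : ℝ → ℕ → ℝ,
        (∀ k, ContinuousOn (fun s => ψ s k) (Set.Ioo (π / 4 - ε) (π / 4 + ε))) →
        (∀ k, ψ (π / 4) k = 0) →
        (∀ γ₁ ∈ Set.Ioo (π / 4 - ε) (π / 4 + ε),
          Fred γ N γ₁ (ψ γ₁ 2) (ψ γ₁) 2 = 0 ∧
          ∀ k, Odd k → 3 ≤ k → k ≤ N → Fred γ N γ₁ (ψ γ₁ 2) (ψ γ₁) k = 0) →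
        ∃ δ : ℝ, 0 < δ ∧ ∀ γ₁ ∈ Set.Ioo (π / 4 - δ) (π / 4 + δ),
          ψ γ₁ 2 = φ γ₁ 2 ∧ ∀ k, Odd k → 3 ≤ k → k ≤ N → ψ γ₁ k = φ γ₁ k) ∧
      (∃ C : ℝ, 0 < C ∧ ∀ γ₁ ∈ Set.Ioo (π / 4) (π / 4 + ε),
        |φ γ₁ 2 - (12 / π) * (γ₁ - π / 4)| ≤ C * (γ₁ - π / 4) ^ 2 ∧
        |φ γ₁ 3 - (144 * γ 3 (π / 4) / (4 * π * γ 3 (π / 4) + 3 * π ^ 2)) * (γ₁ - π / 4)| ≤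
          C * (γ₁ - π / 4) ^ 2 ∧
        ∀ k, Odd k → 5 ≤ k → k ≤ N → |φ γ₁ k| ≤ C * (γ₁ - π / 4) ^ 2) :=
  stmt_15_general N hN γ hγ1 hγhigh hγC2 hγrange hγ2pos
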